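/- For the standard basis element g_i of G = N_{2,n}(R), the centralizer C_G(g_i) equals the internal direct product g_i^R · Z(G), where g_i^R = {g_i^α : α ∈ R}; that is, C_G(g_i) = g_i^R ⊕ Z(G), with g_i^R ∩ Z(G) = 1. -/

import Mathlib

abbrev Idx (n : ℕ) := {p : Fin n × Fin n // p.1 < p.2}

/-- `N_{2,n}(R)`: tuples `((α_i)_{1≤i≤n}, (γ_{ij})_{1≤i<j≤n})` over `R`. -/
def N2 (R : Type*) (n : ℕ) := (Fin n → R) × (Idx n → R)

variable {R : Type*} [Ring R] {n : ℕ}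

/-- The group structure with multiplication
`((α_i),(γ_{ij}))·((β_i),(γ'_{ij})) = ((α_i+β_i),(γ_{ij}+γ'_{ij}+α_i β_j))`. -/
instance N2.instGroup : Group (N2 R n) where
  mul x y := (x.1 + y.1, fun p => x.2 p + y.2 p + x.1 p.1.1 * y.1 p.1.2)
  one := (0, fun _ => 0)
  inv x := (-x.1, fun p => x.1 p.1.1 * x.1 p.1.2 - x.2 p)
  mul_assoc a b c := by
    refine Prod.ext ?_ ?_
    · show a.1 + b.1 + c.1 = a.1 + (b.1 + c.1)
      rw [add_assoc]
    · funext p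
      show a.2 p + b.2 p + (a.1 p.1.1 * b.1 p.1.2) + c.2 p + (a.1 + b.1) p.1.1 * c.1 p.1.2 = _
      show _ = a.2 p + (b.2 p + c.2 p + b.1 p.1.1 * c.1 p.1.2) + a.1 p.1.1 * (b.1 + c.1) p.1.2
      simp only [Pi.add_apply]
      noncomm_ring
  one_mul a := by
    refine Prod.ext ?_ ?_
    · show 0 + a.1 = a.1; simp
    · funext p
      show 0 + a.2 p + (0:Fin n → R) p.1.1 * a.1 p.1.2 = a.2 p
      simp
  mul_one a := by
    refine Prod.ext ?_ ?_
    · show a.1 + 0 = a.1; simp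
    · funext p
      show a.2 p + 0 + a.1 p.1.1 * (0:Fin n → R) p.1.2 = a.2 p
      simp
  inv_mul_cancel a := by
    refine Prod.ext ?_ ?_
    · show -a.1 + a.1 = 0; simp
    · funext p
      show (a.1 p.1.1 * a.1 p.1.2 - a.2 p) + a.2 p + (-a.1) p.1.1 * a.1 p.1.2 = 0
      simp

/-- `g_i^α`: the element with `α` in the `i`-th coordinate and `0` elsewhere. -/
def gi (i : Fin n) (a : R) : N2 R n := (Pi.single i a, 0)

/-- `g_{ij}^γ`: the element with `γ` in the `(i,j)` coordinate and `0` elsewhere. -/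
def gij (p : Idx n) (c : R) : N2 R n := (0, Pi.single p c)

lemma N2.mul_def (x y : N2 R n) :
    x * y = (x.1 + y.1, fun p => x.2 p + y.2 p + x.1 p.1.1 * y.1 p.1.2) := rfl

lemma N2.inv_fst (x : N2 R n) : (x⁻¹).1 = -x.1 := rfl

lemma gi_snd (i : Fin n) (a : R) (p : Idx n) :
    (gi i a).2 p = 0 := rfl

lemma gi_mul (i : Fin n) (a b : R) : gi i a * gi i b = gi i (a + b) := by
  refine Prod.ext ?_ ?_
  · show (Pi.single i a : Fin n → R) + Pi.single i b = Pi.single i (a + b)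
    simp [Pi.single_add]
  · funext p
    show (0 : R) + 0 + (Pi.single i a : Fin n → R) p.1.1 * (Pi.single i b : Fin n → R) p.1.2 = 0
    rcases eq_or_ne p.1.1 i with h | h
    · have h2 : p.1.2 ≠ i := fun he => absurd (h ▸ he ▸ p.2) (lt_irrefl _)
      simp [Pi.single_eq_of_ne h2]
    · simp [Pi.single_eq_of_ne h]

lemma gi_zero (i : Fin n) : gi i (0 : R) = 1 := by
  refine Prod.ext ?_ rfl
  show (Pi.single i (0 : R) : Fin n → R) = 0
  simp

/-- Commuting with `g_j` means all off-`j` first coordinates vanish. -/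
lemma comm_gi_iff (j : Fin n) (x : N2 R n) :
    gi j (1 : R) * x = x * gi j 1 ↔ ∀ a, a ≠ j → x.1 a = 0 := by
  constructor
  · intro h a ha
    rcases ha.lt_or_gt with h1 | h1
    · have hp := congrFun (congrArg Prod.snd h) ⟨(a, j), h1⟩
      rw [N2.mul_def, N2.mul_def] at hp
      simp only [gi] at hp
      simpa [Pi.single_eq_of_ne (ne_of_lt h1)] using hp.symm
    · have hp := congrFun (congrArg Prod.snd h) ⟨(j, a), h1⟩
      rw [N2.mul_def, N2.mul_def] at hp
      simp only [gi] at hp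
      simpa [Pi.single_eq_of_ne (ne_of_gt h1)] using hp
  · intro h
    refine Prod.ext ?_ ?_
    · show (gi j (1:R)).1 + x.1 = x.1 + (gi j (1:R)).1
      rw [add_comm]
    · funext p
      show (gi j (1:R)).2 p + x.2 p + (Pi.single j (1:R) : Fin n → R) p.1.1 * x.1 p.1.2
          = x.2 p + (gi j (1:R)).2 p + x.1 p.1.1 * (Pi.single j (1:R) : Fin n → R) p.1.2
      rcases eq_or_ne p.1.1 j with h1 | h1
      · have h2 : p.1.2 ≠ j := fun he => absurd (h1 ▸ he ▸ p.2) (lt_irrefl _)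
        simp [gi_snd, h1, Pi.single_eq_of_ne h2, h _ h2]
      · rcases eq_or_ne p.1.2 j with h2 | h2
        · simp [gi_snd, h2, Pi.single_eq_of_ne h1, h _ h1]
        · simp [gi_snd, Pi.single_eq_of_ne h1, Pi.single_eq_of_ne h2]

lemma mem_center_iff_fst (hn : 2 ≤ n) (x : N2 R n) :
    x ∈ Subgroup.center (N2 R n) ↔ x.1 = 0 := by
  have : Nontrivial (Fin n) := Fin.nontrivial_iff_two_le.mpr hn
  rw [Subgroup.mem_center_iff]
  constructor
  · intro h
    funext a
    obtain ⟨j, hj⟩ := exists_ne a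
    exact (comm_gi_iff j x).mp (h (gi j 1)) a (Ne.symm hj)
  · intro h g
    refine Prod.ext ?_ ?_
    · show g.1 + x.1 = x.1 + g.1
      rw [add_comm]
    · funext p
      show g.2 p + x.2 p + g.1 p.1.1 * x.1 p.1.2
          = x.2 p + g.2 p + x.1 p.1.1 * g.1 p.1.2
      simp [h, add_comm]

/-- The subgroup `g_i^R`. -/
def giRsub (i : Fin n) : Subgroup (N2 R n) where
  carrier := Set.range (gi i)
  one_mem' := ⟨0, gi_zero i⟩
  mul_mem' := by rintro _ _ ⟨a, rfl⟩ ⟨b, rfl⟩; exact ⟨a + b, (gi_mul i a b).symm⟩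
  inv_mem' := by
    rintro _ ⟨a, rfl⟩
    exact ⟨-a, eq_inv_of_mul_eq_one_left (by rw [gi_mul, neg_add_cancel, gi_zero])⟩

/-- the centralizer of the standard basis element `g_i` is the internal
direct product `g_i^R ⊕ Z(G)`, where `g_i^R = {g_i^α : α ∈ R}`. -/
theorem stmt_6 (R : Type*) [Ring R] (n : ℕ) (hn : 2 ≤ n) (i : Fin n) :
    ∃ giR : Subgroup (N2 R n),
      (giR : Set (N2 R n)) = Set.range (gi i : R → N2 R n) ∧
      Subgroup.centralizer {gi i (1 : R)} = giR ⊔ Subgroup.center (N2 R n) ∧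
      giR ⊓ Subgroup.center (N2 R n) = ⊥ := by
  refine ⟨giRsub i, rfl, ?_, ?_⟩
  · apply le_antisymm
    · intro x hx
      have hcomm : gi i (1 : R) * x = x * gi i 1 :=
        Subgroup.mem_centralizer_iff.mp hx _ rfl
      have h1 : ∀ a, a ≠ i → x.1 a = 0 := (comm_gi_iff i x).mp hcomm
      set c := x.1 i with hc
      have hz : (gi i c)⁻¹ * x ∈ Subgroup.center (N2 R n) := by
        rw [mem_center_iff_fst hn]
        funext a
        show (-(Pi.single i c : Fin n → R) + x.1) a = 0
        rcases eq_or_ne a i with rfl | ha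
        · simp [hc]
        · simp [Pi.single_eq_of_ne ha, h1 a ha]
      have hx2 : x = gi i c * ((gi i c)⁻¹ * x) := by
        rw [mul_inv_cancel_left]
      rw [hx2]
      exact Subgroup.mul_mem_sup ⟨c, rfl⟩ hz
    · refine sup_le ?_ (Subgroup.center_le_centralizer _)
      rintro _ ⟨a, rfl⟩
      refine Subgroup.mem_centralizer_iff.mpr ?_
      rintro _ rfl
      rw [gi_mul, gi_mul, add_comm]
  · rw [eq_bot_iff]
    rintro x hx
    obtain ⟨⟨a, rfl⟩, hctr⟩ := Subgroup.mem_inf.mp hx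
    have h0 : (gi i a).1 = 0 := (mem_center_iff_fst hn _).mp hctr
    have ha : a = 0 := by
      have := congrFun h0 i
      simpa [gi] using this
    rw [Subgroup.mem_bot, ha, gi_zero]
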